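/- arXiv:2507.15097 — 2 statements merged into one kernel-verified Lean document; each statement's English description precedes it below -/
import Mathlib

section
/- Let G be a graph on p vertices with exactly k connected components C₁,...,C_k, and let L be its unnormalised Laplacian with eigenvalues 0 = λ₀ ≤ λ₁ ≤ ... and spectral gap λ_g (the smallest nonzero eigenvalue). For β ∈ ℝᵖ define Λ_t(β) = Σ_{ℓ=1}^p √|(e^{-tL}(β⊙β))_ℓ| and Λ_∞(β) = Σ_{j=1}^k √|C_j| · ‖β_{C_j}‖₂ (the group lasso penalty). If Ξ := e^{-tλ_g} ‖β⊙β‖₂ ≤ (1/2) min over active groups i (those with β_{C_i} ≠ 0) of ‖β_{C_i}‖₂²/|C_i|, then |Λ_t(β) − Λ_∞(β)| ≤ p·√Ξ. -/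
/-!
The heat flow `e^{-tL}` fixes the vector `η̄` of group averages of `η = β ⊙ β`, since `η̄` is a
combination of component indicators and so lies in the kernel of `L`. It contracts the centred
remainder `η - η̄` (zero sum on every group) by `e^{-tλ_g}`: an eigenvector `u` of `L` with
eigenvalue `μ` that is not orthogonal to a centred vector has a nonzero centred part `w`, and
`L w = μ u` turns the gap inequality for `w` into `λ_g ≤ μ`. As `‖η - η̄‖₂ ≤ ‖η‖₂`, every
coordinate of `e^{-tL} η` is within `Ξ` of `η̄`, so `|√x - √y| ≤ √|x - y|` costs at most `√Ξ`
per coordinate, and the square roots of the coordinates of `η̄` add up to the group lasso penalty.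
-/

open Matrix Finset

lemma Matrix.mulVec_dotProduct_mulVec_self_of_mem_unitaryGroup {n : Type*} [Fintype n]
    [DecidableEq n] {U : Matrix n n ℝ} (hU : U ∈ unitaryGroup n ℝ) (x : n → ℝ) :
    (U *ᵥ x) ⬝ᵥ (U *ᵥ x) = x ⬝ᵥ x := by
  rw [dotProduct_comm, dotProduct_mulVec, vecMul_mulVec, ← conjTranspose_eq_transpose_of_trivial,
    ← star_eq_conjTranspose, mem_unitaryGroup_iff'.mp hU, vecMul_one]

lemma Matrix.sq_apply_le_dotProduct_self {n : Type*} [Fintype n] (x : n → ℝ) (a : n) :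
    x a ^ 2 ≤ x ⬝ᵥ x := by
  rw [sq, dotProduct]
  exact single_le_sum (f := fun v => x v * x v) (fun v _ => mul_self_nonneg (x v)) (mem_univ a)

lemma Real.abs_sqrt_sub_sqrt_le {a b : ℝ} (ha : 0 ≤ a) (hb : 0 ≤ b) :
    |√a - √b| ≤ √|a - b| := by
  refine Real.abs_le_sqrt ?_
  have hdiff : (√a - √b) * (√a + √b) = a - b := by
    rw [← sq_sqrt ha, ← sq_sqrt hb, sqrt_sq (sqrt_nonneg a), sqrt_sq (sqrt_nonneg b)]; ring
  have hle : |√a - √b| ≤ √a + √b := by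
    rw [abs_le]; constructor <;> linarith [sqrt_nonneg a, sqrt_nonneg b]
  calc (√a - √b) ^ 2 = |√a - √b| * |√a - √b| := by rw [← sq, sq_abs]
    _ ≤ |√a - √b| * (√a + √b) := mul_le_mul_of_nonneg_left hle (abs_nonneg _)
    _ = |a - b| := by rw [← hdiff, abs_mul, abs_of_nonneg (by positivity : 0 ≤ √a + √b)]

lemma Real.abs_sqrt_abs_sub_sqrt_le (a : ℝ) {b : ℝ} (hb : 0 ≤ b) :
    |√|a| - √b| ≤ √|a - b| := by
  refine (abs_sqrt_sub_sqrt_le (abs_nonneg a) hb).trans (sqrt_le_sqrt ?_)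
  simpa only [abs_of_nonneg hb] using abs_abs_sub_abs_le_abs_sub a b

namespace Matrix.IsHermitian

variable {n : Type*} [Fintype n] [DecidableEq n] {A : Matrix n n ℝ}

lemma exp_smul_eq (hA : A.IsHermitian) (s : ℝ) :
    NormedSpace.exp (s • A) = (hA.eigenvectorUnitary : Matrix n n ℝ) *
      diagonal (fun j => Real.exp (s * hA.eigenvalues j)) *
        star (hA.eigenvectorUnitary : Matrix n n ℝ) := by
  set U : Matrix n n ℝ := ↑hA.eigenvectorUnitary
  have hUinv : U⁻¹ = star U := inv_eq_right_inv (Unitary.coe_mul_star_self _)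
  have hsA : s • A = U * diagonal (fun j => s * hA.eigenvalues j) * U⁻¹ := by
    conv_lhs => rw [hA.spectral_theorem]
    rw [hUinv]
    simp only [Unitary.conjStarAlgAut_apply, RCLike.ofReal_real_eq_id, Function.id_comp, U]
    rw [show (fun j => s * hA.eigenvalues j) = s • hA.eigenvalues from rfl, diagonal_smul,
      Matrix.mul_smul, Matrix.smul_mul]
  rw [hsA, exp_conj U _ (Unitary.toUnits hA.eigenvectorUnitary).isUnit, exp_diagonal, hUinv,
    Pi.exp_def, Real.exp_eq_exp_ℝ]

lemma star_eigenvectorUnitary_mulVec_apply (hA : A.IsHermitian) (y : n → ℝ) (j : n) :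
    (star (hA.eigenvectorUnitary : Matrix n n ℝ) *ᵥ y) j = ⇑(hA.eigenvectorBasis j) ⬝ᵥ y := by
  simp [mulVec, dotProduct, star_apply]

lemma eigenvalues_mul_dotProduct (hA : A.IsHermitian) (y : n → ℝ) (j : n) :
    hA.eigenvalues j * (⇑(hA.eigenvectorBasis j) ⬝ᵥ y) =
      ⇑(hA.eigenvectorBasis j) ⬝ᵥ (A *ᵥ y) := by
  rw [dotProduct_mulVec, ← mulVec_transpose, ← conjTranspose_eq_transpose_of_trivial, hA.eq,
    mulVec_eigenvectorBasis, smul_dotProduct, smul_eq_mul]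

lemma exp_smul_mulVec (hA : A.IsHermitian) (s : ℝ) (y : n → ℝ) :
    NormedSpace.exp (s • A) *ᵥ y = (hA.eigenvectorUnitary : Matrix n n ℝ) *ᵥ
      fun j => Real.exp (s * hA.eigenvalues j) * (⇑(hA.eigenvectorBasis j) ⬝ᵥ y) := by
  rw [hA.exp_smul_eq, ← mulVec_mulVec, ← mulVec_mulVec]
  congr 1
  funext j
  rw [mulVec_diagonal, hA.star_eigenvectorUnitary_mulVec_apply]

lemma exp_smul_mulVec_of_mulVec_eq_zero (hA : A.IsHermitian) (s : ℝ) {y : n → ℝ}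
    (hy : A *ᵥ y = 0) :
    NormedSpace.exp (s • A) *ᵥ y = y := by
  have hfix : ∀ j, Real.exp (s * hA.eigenvalues j) * (⇑(hA.eigenvectorBasis j) ⬝ᵥ y) =
      ⇑(hA.eigenvectorBasis j) ⬝ᵥ y := by
    intro j
    have hj := hA.eigenvalues_mul_dotProduct y j
    rw [hy, dotProduct_zero, mul_eq_zero] at hj
    rcases hj with hμ | hc
    · rw [hμ, mul_zero, Real.exp_zero, one_mul]
    · rw [hc, mul_zero]
  simp_rw [hA.exp_smul_mulVec, hfix, ← hA.star_eigenvectorUnitary_mulVec_apply]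
  rw [mulVec_mulVec, mem_unitaryGroup_iff.mp hA.eigenvectorUnitary.2, one_mulVec]

lemma dotProduct_self_exp_neg_smul_mulVec_le (hA : A.IsHermitian) {t lam : ℝ} (ht : 0 ≤ t)
    {y : n → ℝ}
    (hy : ∀ j, ⇑(hA.eigenvectorBasis j) ⬝ᵥ y ≠ 0 → lam ≤ hA.eigenvalues j) :
    (NormedSpace.exp (-(t • A)) *ᵥ y) ⬝ᵥ (NormedSpace.exp (-(t • A)) *ᵥ y) ≤
      Real.exp (-(t * lam)) ^ 2 * (y ⬝ᵥ y) := by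
  have hU := hA.eigenvectorUnitary.2
  have hnorm_y : y ⬝ᵥ y = ∑ j, (⇑(hA.eigenvectorBasis j) ⬝ᵥ y) ^ 2 := by
    rw [← mulVec_dotProduct_mulVec_self_of_mem_unitaryGroup (Unitary.star_mem hU) y]
    simp only [dotProduct, hA.star_eigenvectorUnitary_mulVec_apply, sq]
  have hterm : ∀ j, (Real.exp (-t * hA.eigenvalues j) * (⇑(hA.eigenvectorBasis j) ⬝ᵥ y)) ^ 2 ≤
      Real.exp (-(t * lam)) ^ 2 * (⇑(hA.eigenvectorBasis j) ⬝ᵥ y) ^ 2 := by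
    intro j
    by_cases hc : ⇑(hA.eigenvectorBasis j) ⬝ᵥ y = 0
    · simp [hc]
    have hμ := hy j hc
    rw [mul_pow]
    gcongr
    nlinarith
  rw [← neg_smul, hA.exp_smul_mulVec, mulVec_dotProduct_mulVec_self_of_mem_unitaryGroup hU,
    hnorm_y, mul_sum]
  simpa only [dotProduct, ← sq] using sum_le_sum fun j _ => hterm j

end Matrix.IsHermitian

section BlockMean

variable {ι α : Type*} [Fintype ι] [DecidableEq α] (C : ι → Finset α)

noncomputable def blockMean (z : α → ℝ) : α → ℝ :=
  ∑ j, ((∑ w ∈ C j, z w) / #(C j)) • fun v => if v ∈ C j then (1 : ℝ) else 0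

lemma blockMean_apply (z : α → ℝ) (v : α) :
    blockMean C z v = ∑ j, if v ∈ C j then (∑ w ∈ C j, z w) / #(C j) else 0 := by
  simp [blockMean]

variable {C}

lemma blockMean_nonneg {z : α → ℝ} (hz : ∀ v, 0 ≤ z v) (v : α) : 0 ≤ blockMean C z v := by
  rw [blockMean_apply]
  refine sum_nonneg fun j _ => ?_
  split_ifs
  exacts [div_nonneg (sum_nonneg fun w _ => hz w) (Nat.cast_nonneg _), le_rfl]

lemma blockMean_apply_of_mem (hdisj : ∀ i j, i ≠ j → Disjoint (C i) (C j)) (z : α → ℝ)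
    {i : ι} {v : α} (hv : v ∈ C i) : blockMean C z v = (∑ w ∈ C i, z w) / #(C i) := by
  rw [blockMean_apply, sum_eq_single i (fun j _ hji => if_neg fun hvj =>
    disjoint_left.mp (hdisj j i hji) hvj hv) (by simp), if_pos hv]

lemma mulVec_blockMean_eq_zero [Fintype α] {A : Matrix α α ℝ}
    (hker : ∀ i, A *ᵥ (fun v => if v ∈ C i then (1 : ℝ) else 0) = 0) (z : α → ℝ) :
    A *ᵥ blockMean C z = 0 := by
  simp [blockMean, mulVec_sum, mulVec_smul, hker]

lemma blockMean_dotProduct_eq_zero [Fintype α] (z : α → ℝ) {y : α → ℝ}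
    (hy : ∀ i, ∑ v ∈ C i, y v = 0) : blockMean C z ⬝ᵥ y = 0 := by
  rw [blockMean, sum_dotProduct]
  refine sum_eq_zero fun j _ => ?_
  simp [dotProduct, ← mul_sum, hy]

lemma sum_sub_blockMean_eq_zero (hdisj : ∀ i j, i ≠ j → Disjoint (C i) (C j)) (z : α → ℝ)
    (i : ι) : ∑ v ∈ C i, (z - blockMean C z) v = 0 := by
  rw [sum_congr rfl fun v hv => by rw [Pi.sub_apply, blockMean_apply_of_mem hdisj z hv],
    sum_sub_distrib, sum_const, nsmul_eq_mul]
  rcases (C i).eq_empty_or_nonempty with h | h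
  · simp [h]
  · field_simp [(card_pos.mpr h).ne']
    ring

lemma dotProduct_self_sub_blockMean_le [Fintype α]
    (hdisj : ∀ i j, i ≠ j → Disjoint (C i) (C j)) (z : α → ℝ) :
    (z - blockMean C z) ⬝ᵥ (z - blockMean C z) ≤ z ⬝ᵥ z := by
  have horth := blockMean_dotProduct_eq_zero z (sum_sub_blockMean_eq_zero hdisj z)
  have hz : z = (z - blockMean C z) + blockMean C z := by abel
  conv_rhs => rw [hz]
  simp only [add_dotProduct, dotProduct_add, horth, dotProduct_comm (z - blockMean C z)]
  have hnonneg : 0 ≤ blockMean C z ⬝ᵥ blockMean C z := sum_nonneg fun v _ => mul_self_nonneg _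
  linarith

lemma sum_sqrt_blockMean [Fintype α] (hdisj : ∀ i j, i ≠ j → Disjoint (C i) (C j))
    (z : α → ℝ) : ∑ v, √(blockMean C z v) = ∑ j, √(#(C j) : ℝ) * √(∑ v ∈ C j, z v) := by
  have hpoint : ∀ v, √(blockMean C z v) =
      ∑ j, if v ∈ C j then √((∑ w ∈ C j, z w) / #(C j)) else 0 := by
    intro v
    by_cases hcov : ∃ i, v ∈ C i
    · obtain ⟨i, hi⟩ := hcov
      rw [blockMean_apply_of_mem hdisj z hi, sum_eq_single i (fun j _ hji => if_neg fun hvj =>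
        disjoint_left.mp (hdisj j i hji) hvj hi) (by simp), if_pos hi]
    · simp [blockMean_apply, not_exists.mp hcov]
  rw [sum_congr rfl fun v _ => hpoint v, sum_comm]
  refine sum_congr rfl fun j _ => ?_
  rw [sum_ite_mem, univ_inter, sum_const, nsmul_eq_mul, Real.sqrt_div' _ (Nat.cast_nonneg _)]
  rcases (C j).eq_empty_or_nonempty with h | h
  · simp [h]
  · have hsqrt : √(#(C j) : ℝ) ≠ 0 := by positivity
    field_simp
    rw [Real.sq_sqrt (Nat.cast_nonneg _), mul_comm]

end BlockMean

section SpectralGap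

variable {ι α : Type*} [Fintype ι] [Fintype α] [DecidableEq α] {C : ι → Finset α}
  {A : Matrix α α ℝ} {lam : ℝ}

lemma le_of_mulVec_eq_smul_of_dotProduct_ne_zero (hdisj : ∀ i j, i ≠ j → Disjoint (C i) (C j))
    (hker : ∀ i, A *ᵥ (fun v => if v ∈ C i then (1 : ℝ) else 0) = 0)
    (hgap : ∀ x : α → ℝ, (∀ i, ∑ v ∈ C i, x v = 0) → lam * (∑ v, x v ^ 2) ≤ x ⬝ᵥ (A *ᵥ x))
    {μ : ℝ} {u y : α → ℝ} (hu : A *ᵥ u = μ • u) (hy : ∀ i, ∑ v ∈ C i, y v = 0)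
    (huy : u ⬝ᵥ y ≠ 0) : lam ≤ μ := by
  set w := u - blockMean C u
  have hw : ∀ i, ∑ v ∈ C i, w v = 0 := sum_sub_blockMean_eq_zero hdisj u
  have hwy : w ⬝ᵥ y = u ⬝ᵥ y := by
    rw [sub_dotProduct, blockMean_dotProduct_eq_zero u hy, sub_zero]
  have hwu : w ⬝ᵥ u = w ⬝ᵥ w := by
    rw [← sub_zero (w ⬝ᵥ u), ← blockMean_dotProduct_eq_zero u hw, dotProduct_comm _ w]
    exact (dotProduct_sub w u _).symm
  have hAw : A *ᵥ w = μ • u := by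
    rw [mulVec_sub, mulVec_blockMean_eq_zero hker, sub_zero, hu]
  have hpos : 0 < w ⬝ᵥ w := by
    refine lt_of_le_of_ne (sum_nonneg fun v _ => mul_self_nonneg (w v)) fun h => huy ?_
    rw [← hwy, dotProduct_self_eq_zero.mp h.symm, zero_dotProduct]
  have hrayleigh := hgap w hw
  rw [hAw, dotProduct_smul, smul_eq_mul, hwu,
    show ∑ v, w v ^ 2 = w ⬝ᵥ w by simp only [dotProduct, sq]] at hrayleigh
  exact le_of_mul_le_mul_right hrayleigh hpos

lemma abs_exp_neg_smul_mulVec_apply_le (hA : A.IsHermitian)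
    (hdisj : ∀ i j, i ≠ j → Disjoint (C i) (C j))
    (hker : ∀ i, A *ᵥ (fun v => if v ∈ C i then (1 : ℝ) else 0) = 0)
    (hgap : ∀ x : α → ℝ, (∀ i, ∑ v ∈ C i, x v = 0) → lam * (∑ v, x v ^ 2) ≤ x ⬝ᵥ (A *ᵥ x))
    {t : ℝ} (ht : 0 ≤ t) {y : α → ℝ} (hy : ∀ i, ∑ v ∈ C i, y v = 0) (a : α) :
    |(NormedSpace.exp (-(t • A)) *ᵥ y) a| ≤ Real.exp (-(t * lam)) * √(y ⬝ᵥ y) := by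
  have hsq := hA.dotProduct_self_exp_neg_smul_mulVec_le ht fun j hj =>
    le_of_mulVec_eq_smul_of_dotProduct_ne_zero hdisj hker hgap (hA.mulVec_eigenvectorBasis j) hy hj
  rw [← Real.sqrt_sq (Real.exp_pos _).le, ← Real.sqrt_mul (sq_nonneg _)]
  exact Real.abs_le_sqrt ((sq_apply_le_dotProduct_self _ a).trans hsq)

end SpectralGap

open Matrix NormedSpace in
theorem heatflow_penalty_close_to_groupLasso_general
    {p k : ℕ} (C : Fin k → Finset (Fin p))
    (hdisj : ∀ i j, i ≠ j → Disjoint (C i) (C j))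
    (L : Matrix (Fin p) (Fin p) ℝ) (hL : L.PosSemidef)
    (hker : ∀ i, L *ᵥ (fun v => if v ∈ C i then (1:ℝ) else 0) = 0)
    (lamg t : ℝ) (ht : 0 ≤ t)
    (hgap : ∀ x : Fin p → ℝ, (∀ i, ∑ v ∈ C i, x v = 0) →
      lamg * (∑ v, x v ^ 2) ≤ x ⬝ᵥ (L *ᵥ x))
    (β : Fin p → ℝ) :
    |(∑ ℓ, Real.sqrt |(NormedSpace.exp (-(t • L)) *ᵥ (fun v => β v * β v)) ℓ|) -
        ∑ j, Real.sqrt ((C j).card) * Real.sqrt (∑ v ∈ C j, β v ^ 2)| ≤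
      p * Real.sqrt (Real.exp (-(t * lamg)) * Real.sqrt (∑ v, (β v ^ 2) ^ 2)) := by
  set η : Fin p → ℝ := fun v => β v * β v
  set Ξ := Real.exp (-(t * lamg)) * √(∑ v, (β v ^ 2) ^ 2)
  have hfix : exp (-(t • L)) *ᵥ blockMean C η = blockMean C η := by
    rw [← neg_smul]
    exact hL.1.exp_smul_mulVec_of_mulVec_eq_zero _ (mulVec_blockMean_eq_zero hker η)
  have hclose : ∀ ℓ, |(exp (-(t • L)) *ᵥ η) ℓ - blockMean C η ℓ| ≤ Ξ := fun ℓ => calc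
    _ = |(exp (-(t • L)) *ᵥ (η - blockMean C η)) ℓ| := by rw [mulVec_sub, hfix, Pi.sub_apply]
    _ ≤ Real.exp (-(t * lamg)) * √((η - blockMean C η) ⬝ᵥ (η - blockMean C η)) :=
      abs_exp_neg_smul_mulVec_apply_le hL.1 hdisj hker hgap ht (sum_sub_blockMean_eq_zero hdisj η) ℓ
    _ ≤ Real.exp (-(t * lamg)) * √(η ⬝ᵥ η) := by
      gcongr
      exact dotProduct_self_sub_blockMean_le hdisj η
    _ = Ξ := by simp only [Ξ, dotProduct, η, sq]
  have hgroup : ∀ j, ∑ v ∈ C j, β v ^ 2 = ∑ v ∈ C j, η v := fun j => by simp only [η, sq]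
  simp_rw [hgroup, ← sum_sqrt_blockMean hdisj η, ← sum_sub_distrib]
  have hb : ∀ ℓ, 0 ≤ blockMean C η ℓ := blockMean_nonneg fun v => mul_self_nonneg (β v)
  calc _ ≤ ∑ ℓ, |√|(exp (-(t • L)) *ᵥ η) ℓ| - √(blockMean C η ℓ)| := abs_sum_le_sum_abs _ _
    _ ≤ ∑ ℓ, √|(exp (-(t • L)) *ᵥ η) ℓ - blockMean C η ℓ| :=
      sum_le_sum fun ℓ _ => Real.abs_sqrt_abs_sub_sqrt_le _ (hb ℓ)
    _ ≤ ∑ _ℓ : Fin p, √Ξ := sum_le_sum fun ℓ _ => Real.sqrt_le_sqrt (hclose ℓ)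
    _ = p * √Ξ := by simp

open Matrix NormedSpace in
/-- Comparison of the heat-flow penalty `Λ_t` with the group lasso penalty `Λ_∞`:
for a graph whose connected components are the groups `C₁,…,C_k` (so the Laplacian
kills the component indicators and has spectral gap `λ_g` on their orthocomplement),
if `Ξ = e^{-tλ_g}‖β⊙β‖₂` is at most half of `‖β_{Cᵢ}‖₂²/|Cᵢ|` for every active
group `i`, then `|Λ_t(β) − Λ_∞(β)| ≤ p·√Ξ`. -/
theorem heatflow_penalty_close_to_groupLasso
    {p k : ℕ} (C : Fin k → Finset (Fin p))
    (hne : ∀ i, (C i).Nonempty)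
    (hdisj : ∀ i j, i ≠ j → Disjoint (C i) (C j))
    (hcover : ∀ v, ∃ i, v ∈ C i)
    (L : Matrix (Fin p) (Fin p) ℝ) (hL : L.PosSemidef)
    (hker : ∀ i, L *ᵥ (fun v => if v ∈ C i then (1:ℝ) else 0) = 0)
    (lamg t : ℝ) (hlamg : 0 < lamg) (ht : 0 ≤ t)
    (hgap : ∀ x : Fin p → ℝ, (∀ i, ∑ v ∈ C i, x v = 0) →
      lamg * (∑ v, x v ^ 2) ≤ x ⬝ᵥ (L *ᵥ x))
    (β : Fin p → ℝ)
    (hΞ : ∀ i, (∃ v ∈ C i, β v ≠ 0) →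
      Real.exp (-(t * lamg)) * Real.sqrt (∑ v, (β v ^ 2) ^ 2) ≤
        (1 / 2) * ((∑ v ∈ C i, β v ^ 2) / (C i).card)) :
    |(∑ ℓ, Real.sqrt |(NormedSpace.exp (-(t • L)) *ᵥ (fun v => β v * β v)) ℓ|) -
        ∑ j, Real.sqrt ((C j).card) * Real.sqrt (∑ v ∈ C j, β v ^ 2)| ≤
      p * Real.sqrt (Real.exp (-(t * lamg)) * Real.sqrt (∑ v, (β v ^ 2) ^ 2)) :=
  heatflow_penalty_close_to_groupLasso_general C hdisj L hL hker lamg t ht hgap β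
end

section
/- With the heat-flow penalty Λ_t as above on a graph whose components are C₁,...,C_k, for every β ∈ ℝᵖ, lim_{t→∞} Λ_t(β) = Σ_{j=1}^k √|C_j| ‖β_{C_j}‖₂, i.e., the heat-flow penalty converges pointwise to the group lasso penalty as t → ∞. -/
/-!
Diagonalising the positive semidefinite `L`, the heat flow `exp (-t L)` fixes `ker L` and damps
every other eigendirection by `exp (-t λ)` with `λ > 0`, so `exp (-t L) y` tends to the orthogonal
projection of `y` onto `ker L`. The hypotheses on `L` make `ker L` the space of vectors constant
on each component, so this projection is the vector of component averages of `y = β ⊙ β`; the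
penalty is continuous in `y`, and at that vector it equals the group-lasso penalty.
-/

open Function Matrix NormedSpace Filter Topology Finset

namespace Matrix

variable {n : Type*} [Fintype n] [DecidableEq n]

theorem exp_mulVec_of_mulVec_eq_smul {A : Matrix n n ℝ} {u : n → ℝ} {μ : ℝ}
    (h : A *ᵥ u = μ • u) : exp A *ᵥ u = Real.exp μ • u := by
  -- Any submultiplicative norm makes the exponential series converge.
  let : NormedRing (Matrix n n ℝ) := Matrix.linftyOpNormedRing
  let : NormedAlgebra ℝ (Matrix n n ℝ) := Matrix.linftyOpNormedAlgebra
  have hpow (k : ℕ) : A ^ k *ᵥ u = μ ^ k • u := by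
    induction k with
    | zero => simp
    | succ k ih => rw [pow_succ', ← mulVec_mulVec, ih, mulVec_smul, h, smul_smul, ← pow_succ]
  have hA := (exp_series_hasSum_exp' (𝕂 := ℝ) A).map (mulVec.addMonoidHomLeft u)
    (continuous_id.matrix_mulVec continuous_const)
  have hμ := (exp_series_hasSum_exp' (𝕂 := ℝ) μ).smul_const u
  rw [← Real.exp_eq_exp_ℝ] at hμ
  refine hA.unique (hμ.congr_fun fun k => ?_)
  simp [mulVec.addMonoidHomLeft, smul_mulVec, hpow, smul_smul]

theorem PosSemidef.tendsto_exp_neg_smul_mulVec_zero {A : Matrix n n ℝ} (hA : A.PosSemidef)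
    {z : n → ℝ} (hz : ∀ x, A *ᵥ x = 0 → x ⬝ᵥ z = 0) :
    Tendsto (fun t : ℝ => exp (-(t • A)) *ᵥ z) atTop (𝓝 0) := by
  set b := hA.1.eigenvectorBasis
  set ev := hA.1.eigenvalues
  have hz_eq : z = ∑ i, (⇑(b i) ⬝ᵥ z) • ⇑(b i) := by
    simpa [EuclideanSpace.inner_eq_star_dotProduct, dotProduct_comm]
      using congrArg WithLp.ofLp (b.sum_repr' (WithLp.toLp 2 z)).symm
  have hexp (t : ℝ) :
      exp (-(t • A)) *ᵥ z = ∑ i, (Real.exp (-(t * ev i)) * (⇑(b i) ⬝ᵥ z)) • ⇑(b i) := by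
    have heigen (i : n) : -(t • A) *ᵥ ⇑(b i) = (-(t * ev i)) • ⇑(b i) := by
      rw [neg_mulVec, smul_mulVec, hA.1.mulVec_eigenvectorBasis, smul_smul, neg_smul]
    conv_lhs => rw [hz_eq]
    simp_rw [mulVec_sum, mulVec_smul, exp_mulVec_of_mulVec_eq_smul (heigen _), smul_smul,
      mul_comm]
  have hcoeff (i : n) :
      Tendsto (fun t : ℝ => Real.exp (-(t * ev i)) * (⇑(b i) ⬝ᵥ z)) atTop (𝓝 0) := by
    rcases (hA.eigenvalues_nonneg i).eq_or_lt with h0 | hpos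
    · have : ⇑(b i) ⬝ᵥ z = 0 :=
        hz _ (by rw [hA.1.mulVec_eigenvectorBasis, ← h0, zero_smul])
      simp [this]
    · simpa using (Real.tendsto_exp_atBot.comp
        (tendsto_neg_atTop_atBot.comp (tendsto_id.atTop_mul_const hpos))).mul_const (⇑(b i) ⬝ᵥ z)
  simp_rw [hexp]
  simpa using tendsto_finsetSum univ fun i _ => (hcoeff i).smul_const (⇑(b i))

theorem PosSemidef.tendsto_exp_neg_smul_mulVec {A : Matrix n n ℝ} (hA : A.PosSemidef)
    {y w : n → ℝ} (hw : A *ᵥ w = 0) (hyw : ∀ x, A *ᵥ x = 0 → x ⬝ᵥ (y - w) = 0) :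
    Tendsto (fun t : ℝ => exp (-(t • A)) *ᵥ y) atTop (𝓝 w) := by
  have hfix (t : ℝ) : exp (-(t • A)) *ᵥ w = w := by
    simpa using exp_mulVec_of_mulVec_eq_smul (μ := 0) (by simp [neg_mulVec, smul_mulVec, hw])
  simpa [mulVec_sub, hfix] using (hA.tendsto_exp_neg_smul_mulVec_zero hyw).const_add w

end Matrix

section BlockAverage

variable {ι κ : Type*} [DecidableEq ι] [Fintype κ] {C : κ → Finset ι}

noncomputable def blockAverage (C : κ → Finset ι) (y : ι → ℝ) : ι → ℝ :=
  ∑ j, ((∑ v ∈ C j, y v) / #(C j)) • fun v => if v ∈ C j then (1 : ℝ) else 0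

theorem blockAverage_apply_of_mem (hdisj : Pairwise (Disjoint on C)) (y : ι → ℝ) {v : ι} {j : κ}
    (hv : v ∈ C j) : blockAverage C y v = (∑ u ∈ C j, y u) / #(C j) := by
  rw [blockAverage, Finset.sum_apply, Finset.sum_eq_single j]
  · simp [hv]
  · intro i _ hij
    simp [Finset.disjoint_left.mp (hdisj hij.symm) hv]
  · simp

theorem sum_blockAverage (hdisj : Pairwise (Disjoint on C)) (y : ι → ℝ) (j : κ) :
    ∑ v ∈ C j, blockAverage C y v = ∑ v ∈ C j, y v := by
  rw [Finset.sum_congr rfl fun v hv => blockAverage_apply_of_mem hdisj y hv, sum_const,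
    nsmul_eq_mul]
  rcases (C j).eq_empty_or_nonempty with hC | hC
  · simp [hC]
  · exact mul_div_cancel₀ _ (by exact_mod_cast hC.card_pos.ne')

variable [Fintype ι]

theorem mulVec_blockAverage {L : Matrix ι ι ℝ}
    (hker : ∀ j, L *ᵥ (fun v => if v ∈ C j then (1 : ℝ) else 0) = 0) (y : ι → ℝ) :
    L *ᵥ blockAverage C y = 0 := by
  simp [blockAverage, mulVec_sum, mulVec_smul, hker]

theorem blockAverage_dotProduct_eq_zero (y : ι → ℝ) {z : ι → ℝ}
    (hz : ∀ j, ∑ v ∈ C j, z v = 0) : blockAverage C y ⬝ᵥ z = 0 := by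
  rw [blockAverage, sum_dotProduct]
  refine sum_eq_zero fun j _ => ?_
  simp [dotProduct, ite_mul, Finset.sum_ite_mem, ← Finset.mul_sum, hz]

theorem eq_blockAverage_of_mulVec_eq_zero (hdisj : Pairwise (Disjoint on C)) {L : Matrix ι ι ℝ}
    (hker : ∀ j, L *ᵥ (fun v => if v ∈ C j then (1 : ℝ) else 0) = 0)
    (hinj : ∀ x, (∀ j, ∑ v ∈ C j, x v = 0) → L *ᵥ x = 0 → x = 0)
    {x : ι → ℝ} (hx : L *ᵥ x = 0) : x = blockAverage C x := by
  refine sub_eq_zero.mp (hinj _ (fun j => ?_) ?_)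
  · simp only [Pi.sub_apply, Finset.sum_sub_distrib, sum_blockAverage hdisj, sub_self]
  · rw [mulVec_sub, hx, mulVec_blockAverage hker, sub_zero]

theorem sum_sqrt_abs_blockAverage (hdisj : Pairwise (Disjoint on C)) (hcover : ∀ v, ∃ j, v ∈ C j)
    {y : ι → ℝ} (hy : ∀ v, 0 ≤ y v) :
    ∑ v, √|blockAverage C y v| = ∑ j, √(#(C j) : ℝ) * √(∑ v ∈ C j, y v) := by
  have huniv : (univ : Finset ι) = univ.biUnion C := by
    ext v; simpa using hcover v
  rw [huniv, sum_biUnion fun i _ j _ hij => hdisj hij]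
  refine Finset.sum_congr rfl fun j _ => ?_
  have hS : 0 ≤ ∑ v ∈ C j, y v := sum_nonneg fun v _ => hy v
  rw [Finset.sum_congr rfl fun v hv => by rw [blockAverage_apply_of_mem hdisj y hv],
    sum_const, nsmul_eq_mul, abs_of_nonneg (by positivity), Real.sqrt_div hS, mul_div_left_comm,
    Real.div_sqrt, mul_comm]

end BlockAverage

open Matrix NormedSpace in
theorem heatflow_penalty_tendsto_groupLasso_general
    {p k : ℕ} (C : Fin k → Finset (Fin p))
    (hdisj : ∀ i j, i ≠ j → Disjoint (C i) (C j))
    (hcover : ∀ v, ∃ i, v ∈ C i)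
    (L : Matrix (Fin p) (Fin p) ℝ) (hL : L.PosSemidef)
    (hker : ∀ i, L *ᵥ (fun v => if v ∈ C i then (1:ℝ) else 0) = 0)
    (hpos : ∀ x : Fin p → ℝ, (∀ i, ∑ v ∈ C i, x v = 0) → x ≠ 0 → 0 < x ⬝ᵥ (L *ᵥ x))
    (β : Fin p → ℝ) :
    Filter.Tendsto
      (fun t : ℝ =>
        ∑ ℓ, Real.sqrt |(NormedSpace.exp (-(t • L)) *ᵥ (fun v => β v * β v)) ℓ|)
      Filter.atTop
      (nhds (∑ j, Real.sqrt ((C j).card) * Real.sqrt (∑ v ∈ C j, β v ^ 2))) := by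
  set y : Fin p → ℝ := fun v => β v * β v
  set w := blockAverage C y
  have hdisj' : Pairwise (Disjoint on C) := fun i j hij => hdisj i j hij
  have hinj : ∀ x, (∀ j, ∑ v ∈ C j, x v = 0) → L *ᵥ x = 0 → x = 0 := by
    intro x hsum hx
    by_contra hne
    simpa [hx] using hpos x hsum hne
  have hyw : ∀ x, L *ᵥ x = 0 → x ⬝ᵥ (y - w) = 0 := by
    intro x hx
    rw [eq_blockAverage_of_mulVec_eq_zero hdisj' hker hinj hx]
    refine blockAverage_dotProduct_eq_zero x fun j => ?_
    rw [Pi.sub_def, Finset.sum_sub_distrib, sum_blockAverage hdisj', sub_self]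
  have hflow := hL.tendsto_exp_neg_smul_mulVec (mulVec_blockAverage hker y) hyw
  have hpenalty : Continuous fun x : Fin p → ℝ => ∑ ℓ, √|x ℓ| :=
    continuous_finsetSum _ fun ℓ _ => (continuous_apply ℓ).abs.sqrt
  have hlimit : ∑ ℓ, √|w ℓ| = ∑ j, √(#(C j) : ℝ) * √(∑ v ∈ C j, β v ^ 2) := by
    simp only [w, sum_sqrt_abs_blockAverage hdisj' hcover fun v => mul_self_nonneg (β v), y, sq]
  exact hlimit ▸ (hpenalty.tendsto w).comp hflow

open Matrix NormedSpace in
/-- The heat-flow penalty converges pointwise, as `t → ∞`, to the group lasso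
penalty `Σⱼ √|Cⱼ| ‖β_{Cⱼ}‖₂`, for a graph whose connected components are the
groups `C₁,…,C_k` (the Laplacian kills the component indicators and is positive
definite on their orthocomplement). -/
theorem heatflow_penalty_tendsto_groupLasso
    {p k : ℕ} (C : Fin k → Finset (Fin p))
    (hne : ∀ i, (C i).Nonempty)
    (hdisj : ∀ i j, i ≠ j → Disjoint (C i) (C j))
    (hcover : ∀ v, ∃ i, v ∈ C i)
    (L : Matrix (Fin p) (Fin p) ℝ) (hL : L.PosSemidef)
    (hker : ∀ i, L *ᵥ (fun v => if v ∈ C i then (1:ℝ) else 0) = 0)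
    (hpos : ∀ x : Fin p → ℝ, (∀ i, ∑ v ∈ C i, x v = 0) → x ≠ 0 → 0 < x ⬝ᵥ (L *ᵥ x))
    (β : Fin p → ℝ) :
    Filter.Tendsto
      (fun t : ℝ =>
        ∑ ℓ, Real.sqrt |(NormedSpace.exp (-(t • L)) *ᵥ (fun v => β v * β v)) ℓ|)
      Filter.atTop
      (nhds (∑ j, Real.sqrt ((C j).card) * Real.sqrt (∑ v ∈ C j, β v ^ 2))) :=
  heatflow_penalty_tendsto_groupLasso_general C hdisj hcover L hL hker hpos β
end
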